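/- (Characterization C1 of GLS.) A formula φ is a theorem of the Hilbert system GLS if and only if there is a finite set Σ of formulas such that for every GL-model ⟨W,R,V⟩ and every Σ-reflexive world w ∈ W, V(w, φ) = true. -/

import Mathlib

/-- Modal formulas: propositional variables, ⊥, →, □. -/
inductive Formula : Type
  | var : ℕ → Formula
  | bot : Formula
  | imp : Formula → Formula → Formula
  | box : Formula → Formula
deriving DecidableEq

/-- Levels of sequents in GLS_seq: first level (⇒) and second level (⇛). -/
inductive SeqLevel : Type
  | one
  | two
deriving DecidableEq

/-- The set of subformulas of a formula. -/
def Formula.subf : Formula → Finset Formula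
  | .var p => {.var p}
  | .bot => {.bot}
  | .imp φ ψ => insert (.imp φ ψ) (φ.subf ∪ ψ.subf)
  | .box φ => insert (.box φ) φ.subf

/-- SF(Ψ,Φ): all subformulas of formulas in Ψ ∪ Φ. -/
def SF (Ψ Φ : Finset Formula) : Finset Formula := (Ψ ∪ Φ).biUnion Formula.subf

def Formula.isBox : Formula → Bool
  | .box _ => true
  | _ => false

def Formula.unbox : Formula → Formula
  | .box φ => φ
  | φ => φ

/-- Θ_□ = {φ : □φ ∈ Θ}. -/
def boxInv (Θ : Finset Formula) : Finset Formula :=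
  (Θ.filter fun ψ => ψ.isBox).image Formula.unbox

/-- The sequent calculus GLS_seq, on sequents of two levels.  The Bool parameter
records whether the cut rule may be used: `GLSSeq true` is provability in GLS_seq,
`GLSSeq false` is cut-free provability.  The first-level fragment is exactly GL_seq. -/
inductive GLSSeq : Bool → SeqLevel → Finset Formula → Finset Formula → Prop
  | init (c lv φ) : GLSSeq c lv {φ} {φ}
  | initBot (c lv) : GLSSeq c lv {Formula.bot} ∅
  | cut {lv Γ Δ} (φ) : GLSSeq true lv Γ (insert φ Δ) → GLSSeq true lv (insert φ Γ) Δ →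
      GLSSeq true lv Γ Δ
  | weak {c lv Γ Δ Γ' Δ'} : Γ ⊆ Γ' → Δ ⊆ Δ' → GLSSeq c lv Γ Δ → GLSSeq c lv Γ' Δ'
  | impL {c lv Γ Δ φ ψ} : GLSSeq c lv Γ (insert φ Δ) → GLSSeq c lv (insert ψ Γ) Δ →
      GLSSeq c lv (insert (.imp φ ψ) Γ) Δ
  | impR {c lv Γ Δ φ ψ} : GLSSeq c lv (insert φ Γ) (insert ψ Δ) →
      GLSSeq c lv Γ (insert (.imp φ ψ) Δ)
  | boxGL {c Γ φ} : GLSSeq c .one (Γ ∪ Γ.image .box ∪ {.box φ}) {φ} →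
      GLSSeq c .one (Γ.image .box) {.box φ}
  | boxL {c Γ Δ} (φ) : GLSSeq c .two (insert φ Γ) Δ → GLSSeq c .two (insert (.box φ) Γ) Δ
  | lift {c Γ Δ} : GLSSeq c .one Γ Δ → GLSSeq c .two Γ Δ

/-- The sequent calculus GL_seq (on first-level sequents only). -/
inductive GLSeq : Bool → Finset Formula → Finset Formula → Prop
  | init (c φ) : GLSeq c {φ} {φ}
  | initBot (c) : GLSeq c {Formula.bot} ∅
  | cut {Γ Δ} (φ) : GLSeq true Γ (insert φ Δ) → GLSeq true (insert φ Γ) Δ → GLSeq true Γ Δ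
  | weak {c Γ Δ Γ' Δ'} : Γ ⊆ Γ' → Δ ⊆ Δ' → GLSeq c Γ Δ → GLSeq c Γ' Δ'
  | impL {c Γ Δ φ ψ} : GLSeq c Γ (insert φ Δ) → GLSeq c (insert ψ Γ) Δ →
      GLSeq c (insert (.imp φ ψ) Γ) Δ
  | impR {c Γ Δ φ ψ} : GLSeq c (insert φ Γ) (insert ψ Δ) → GLSeq c Γ (insert (.imp φ ψ) Δ)
  | boxGL {c Γ φ} : GLSeq c (Γ ∪ Γ.image .box ∪ {.box φ}) {φ} → GLSeq c (Γ.image .box) {.box φ}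

/-- Proof trees of GLS_seq (cut included). -/
inductive GLSTree : SeqLevel → Finset Formula → Finset Formula → Type
  | init (lv φ) : GLSTree lv {φ} {φ}
  | initBot (lv) : GLSTree lv {Formula.bot} ∅
  | cut {lv Γ Δ} (φ) : GLSTree lv Γ (insert φ Δ) → GLSTree lv (insert φ Γ) Δ → GLSTree lv Γ Δ
  | weak {lv Γ Δ} (Γ' Δ' : Finset Formula) : Γ ⊆ Γ' → Δ ⊆ Δ' → GLSTree lv Γ Δ → GLSTree lv Γ' Δ'
  | impL {lv Γ Δ} (φ ψ) : GLSTree lv Γ (insert φ Δ) → GLSTree lv (insert ψ Γ) Δ →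
      GLSTree lv (insert (.imp φ ψ) Γ) Δ
  | impR {lv Γ Δ} (φ ψ) : GLSTree lv (insert φ Γ) (insert ψ Δ) → GLSTree lv Γ (insert (.imp φ ψ) Δ)
  | boxGL (Γ φ) : GLSTree .one (Γ ∪ Γ.image .box ∪ {.box φ}) {φ} → GLSTree .one (Γ.image .box) {.box φ}
  | boxL {Γ Δ} (φ) : GLSTree .two (insert φ Γ) Δ → GLSTree .two (insert (.box φ) Γ) Δ
  | lift {Γ Δ} : GLSTree .one Γ Δ → GLSTree .two Γ Δ

/-- The set of principal formulas of all (□L) rules occurring in a proof tree. -/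
def GLSTree.principals : ∀ {lv Γ Δ}, GLSTree lv Γ Δ → Finset Formula
  | _, _, _, .init _ _ => ∅
  | _, _, _, .initBot _ => ∅
  | _, _, _, .cut _ t₁ t₂ => t₁.principals ∪ t₂.principals
  | _, _, _, .weak _ _ _ _ t => t.principals
  | _, _, _, .impL _ _ t₁ t₂ => t₁.principals ∪ t₂.principals
  | _, _, _, .impR _ _ t => t.principals
  | _, _, _, .boxGL _ _ t => t.principals
  | _, _, _, .boxL φ t => insert (Formula.box φ) t.principals
  | _, _, _, .lift t => t.principals

/-- A proof tree bundled with its level and conclusion. -/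
abbrev PGLSTree : Type :=
  (lv : SeqLevel) × (Γ : Finset Formula) × (Δ : Finset Formula) × GLSTree lv Γ Δ

/-- The set of subproofs of a proof tree (including the tree itself). -/
def GLSTree.subproofs {lv Γ Δ} (t : GLSTree lv Γ Δ) : Set PGLSTree :=
  insert ⟨lv, Γ, Δ, t⟩ <|
    match lv, Γ, Δ, t with
    | _, _, _, .init _ _ => ∅
    | _, _, _, .initBot _ => ∅
    | _, _, _, .cut _ t₁ t₂ => t₁.subproofs ∪ t₂.subproofs
    | _, _, _, .weak _ _ _ _ t₁ => t₁.subproofs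
    | _, _, _, .impL _ _ t₁ t₂ => t₁.subproofs ∪ t₂.subproofs
    | _, _, _, .impR _ _ t₁ => t₁.subproofs
    | _, _, _, .boxGL _ _ t₁ => t₁.subproofs
    | _, _, _, .boxL _ t₁ => t₁.subproofs
    | _, _, _, .lift t₁ => t₁.subproofs

/-- Kripke satisfaction over a frame `R` with atomic valuation `v`. -/
def KSat {W : Type} (R : W → W → Prop) (v : W → ℕ → Prop) : Formula → W → Prop
  | .var p, w => v w p
  | .bot, _ => False
  | .imp φ ψ, w => KSat R v φ w → KSat R v ψ w
  | .box φ, w => ∀ w', R w w' → KSat R v φ w'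

/-- A GL-model: a nonempty, transitive, converse well-founded Kripke model. -/
structure GLModel where
  World : Type
  ne : Nonempty World
  R : World → World → Prop
  trans : Transitive R
  cwf : ∀ f : ℕ → World, ¬ ∀ i, R (f i) (f (i + 1))
  val : World → ℕ → Prop

/-- Truth of a formula at a world of a GL-model. -/
def GLModel.sat (M : GLModel) (w : M.World) (φ : Formula) : Prop := KSat M.R M.val φ w

/-- Truth of a sequent Γ ▸ Δ at a world: some γ ∈ Γ is false or some δ ∈ Δ is true. -/
def GLModel.seqTrue (M : GLModel) (w : M.World) (Γ Δ : Finset Formula) : Prop :=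
  (∃ γ ∈ Γ, ¬ M.sat w γ) ∨ (∃ δ ∈ Δ, M.sat w δ)

/-- w is Σ-reflexive: □α → α is true at w for every □α ∈ Σ. -/
def GLModel.reflexiveFor (M : GLModel) (w : M.World) (S : Finset Formula) : Prop :=
  ∀ α : Formula, Formula.box α ∈ S → M.sat w ((Formula.box α).imp α)

/-- Saturation conditions (→L), (→R) for first-level sequents. -/
def Saturated1 (Γ Δ : Finset Formula) : Prop :=
  (∀ φ ψ : Formula, φ.imp ψ ∈ Γ → φ ∈ Δ ∨ ψ ∈ Γ) ∧
  (∀ φ ψ : Formula, φ.imp ψ ∈ Δ → φ ∈ Γ ∧ ψ ∈ Δ)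

/-- Saturation for second-level sequents: additionally (□L). -/
def Saturated2 (Γ Δ : Finset Formula) : Prop :=
  Saturated1 Γ Δ ∧ ∀ φ : Formula, Formula.box φ ∈ Γ → φ ∈ Γ

def Saturated : SeqLevel → Finset Formula → Finset Formula → Prop
  | .one => Saturated1
  | .two => Saturated2

/-- The Hilbert system GL. -/
inductive GLHilbert : Formula → Prop
  | ax1 (φ ψ : Formula) : GLHilbert (φ.imp (ψ.imp φ))
  | ax2 (φ ψ χ : Formula) :
      GLHilbert ((φ.imp (ψ.imp χ)).imp ((φ.imp ψ).imp (φ.imp χ)))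
  | ax3 (φ : Formula) : GLHilbert (((φ.imp .bot).imp .bot).imp φ)
  | axK (φ ψ : Formula) :
      GLHilbert ((Formula.box (φ.imp ψ)).imp ((Formula.box φ).imp (Formula.box ψ)))
  | axLob (φ : Formula) :
      GLHilbert ((Formula.box ((Formula.box φ).imp φ)).imp (Formula.box φ))
  | mp {φ ψ} : GLHilbert (φ.imp ψ) → GLHilbert φ → GLHilbert ψ
  | nec {φ} : GLHilbert φ → GLHilbert (Formula.box φ)

/-- The Hilbert system GLS: theorems of GL and all □α → α, closed under modus ponens. -/
inductive GLSHilbert : Formula → Prop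
  | gl {φ} : GLHilbert φ → GLSHilbert φ
  | refl (α : Formula) : GLSHilbert ((Formula.box α).imp α)
  | mp {φ ψ} : GLSHilbert (φ.imp ψ) → GLSHilbert φ → GLSHilbert ψ

/-- Conjunction (encoded with → and ⊥) of a list of formulas; empty conjunction is ⊤. -/
def Formula.conj : List Formula → Formula
  | [] => Formula.bot.imp Formula.bot
  | φ :: l => ((φ.imp ((Formula.conj l).imp .bot)).imp .bot)

/-- Membership predicate for the canonical model: saturated first-level sequents over S
that are not cut-free provable in GLS_seq. -/
def W0pred (S : Finset Formula) (s : Finset Formula × Finset Formula) : Prop :=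
  Saturated1 s.1 s.2 ∧ ¬ GLSSeq false SeqLevel.one s.1 s.2 ∧ s.1 ∪ s.2 ⊆ S

/-- Worlds of the canonical model. -/
def W0 (S : Finset Formula) : Type := {s : Finset Formula × Finset Formula // W0pred S s}

/-- Accessibility of the canonical model: (Γ⇒Δ) R₀ (Γ'⇒Δ') iff Γ_□ ⊊ Γ'_□ and Γ_□ ⊆ Γ'. -/
def R0 (S : Finset Formula) (s t : W0 S) : Prop :=
  boxInv s.1.1 ⊂ boxInv t.1.1 ∧ boxInv s.1.1 ⊆ t.1.1

/-- Valuation of the canonical model: p is true at (Γ⇒Δ) iff p ∈ Γ. -/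
def V0 (S : Finset Formula) (s : W0 S) (p : ℕ) : Prop := Formula.var p ∈ s.1.1

/-- The extended set of worlds W = W₀ ∪ ℕ. -/
def Wext (S : Finset Formula) : Type := W0 S ⊕ ℕ

/-- The extended accessibility relation, with distinguished world `wp` in W₀. -/
def Rext (S : Finset Formula) (wp : W0 S) : Wext S → Wext S → Prop
  | Sum.inl x, Sum.inl y => R0 S x y
  | Sum.inr _, Sum.inl y => y = wp ∨ R0 S wp y
  | Sum.inr n, Sum.inr m => m < n
  | Sum.inl _, Sum.inr _ => False

/-- The extended valuation: worlds in ℕ behave like the distinguished world `wp`. -/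
def Vext (S : Finset Formula) (wp : W0 S) : Wext S → ℕ → Prop
  | Sum.inl x, p => V0 S x p
  | Sum.inr _, p => V0 S wp p

/-!
Every GL-theorem is valid, and a Σ-reflexive world makes each axiom `□α → α` with `□α ∈ Σ`
true; since modus ponens preserves truth at a world, a GLS-derivation of φ yields such a finite Σ,
namely the boxed formulas of the reflexivity axioms it uses.

Conversely, suppose φ holds at every Σ-reflexive world. Then φ is derivable in GL from the finitely
many hypotheses `□α → α`, `□α ∈ Σ`, each of which is a GLS-axiom, so GLS proves φ. Otherwise GL
completeness for finite sets of hypotheses would give a world where those hypotheses hold and φ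
fails, i.e. a Σ-reflexive world refuting φ. That completeness is proved with a finite canonical
model: worlds are maximal consistent subsets of the subformulas of the problem and their
negations, and `x R y` iff `y` contains every `ξ` with `□ξ ∈ x` and strictly more boxed formulas
than `x`, which makes `R` transitive and conversely well-founded. The existence of successors
rests on axiom 4, itself a consequence of Löb's axiom.
-/

def Formula.neg (φ : Formula) : Formula := φ.imp .bot

def Formula.and (φ ψ : Formula) : Formula := (φ.imp ψ.neg).neg

theorem Formula.mem_subf_self (φ : Formula) : φ ∈ φ.subf := by
  cases φ <;> simp [Formula.subf]

theorem Formula.subf_subset_of_mem {φ ψ : Formula} (h : ψ ∈ φ.subf) : ψ.subf ⊆ φ.subf := by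
  induction φ with
  | var p | bot => simp_all [Formula.subf]
  | imp a b iha ihb =>
    simp only [Formula.subf, Finset.mem_insert, Finset.mem_union] at h
    rcases h with rfl | h | h
    · rfl
    · exact (iha h).trans fun _ hx => by simp [Formula.subf, hx]
    · exact (ihb h).trans fun _ hx => by simp [Formula.subf, hx]
  | box a iha =>
    simp only [Formula.subf, Finset.mem_insert] at h
    rcases h with rfl | h
    · rfl
    · exact (iha h).trans fun _ hx => by simp [Formula.subf, hx]

theorem subf_subset_SF {Ψ Φ : Finset Formula} {χ : Formula} (h : χ ∈ SF Ψ Φ) :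
    χ.subf ⊆ SF Ψ Φ := by
  obtain ⟨θ, hθ, hχ⟩ := Finset.mem_biUnion.mp h
  exact (Formula.subf_subset_of_mem hχ).trans (Finset.subset_biUnion_of_mem _ hθ)

theorem mem_boxInv {Θ : Finset Formula} {φ : Formula} : φ ∈ boxInv Θ ↔ φ.box ∈ Θ := by
  constructor
  · simp only [boxInv, Finset.mem_image, Finset.mem_filter]
    rintro ⟨ψ, ⟨hψ, hbox⟩, rfl⟩
    cases ψ <;> simp_all [Formula.isBox, Formula.unbox]
  · exact fun h => Finset.mem_image.mpr ⟨φ.box, Finset.mem_filter.mpr ⟨h, rfl⟩, rfl⟩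

theorem GLHilbert.imp_self (φ : Formula) : GLHilbert (φ.imp φ) :=
  .mp (.mp (.ax2 φ (φ.imp φ) φ) (.ax1 φ (φ.imp φ))) (.ax1 φ φ)

inductive GLDeriv (Γ : Set Formula) : Formula → Prop
  | ax {φ} : GLHilbert φ → GLDeriv Γ φ
  | hyp {φ} : φ ∈ Γ → GLDeriv Γ φ
  | mp {φ ψ} : GLDeriv Γ (φ.imp ψ) → GLDeriv Γ φ → GLDeriv Γ ψ

namespace GLDeriv

variable {Γ Δ : Set Formula} {φ ψ : Formula}

theorem trans (d : GLDeriv Γ φ) (h : ∀ γ ∈ Γ, GLDeriv Δ γ) : GLDeriv Δ φ := by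
  induction d with
  | ax h' => exact .ax h'
  | hyp hγ => exact h _ hγ
  | mp _ _ ih₁ ih₂ => exact .mp ih₁ ih₂

theorem mono (hΓΔ : Γ ⊆ Δ) (d : GLDeriv Γ φ) : GLDeriv Δ φ :=
  d.trans fun _ hγ => .hyp (hΓΔ hγ)

theorem imp_intro (d : GLDeriv (insert φ Γ) ψ) : GLDeriv Γ (φ.imp ψ) := by
  induction d with
  | ax h => exact .mp (.ax (.ax1 _ φ)) (.ax h)
  | hyp h =>
    rcases h with rfl | h
    · exact .ax (.imp_self _)
    · exact .mp (.ax (.ax1 _ φ)) (.hyp h)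
  | mp _ _ ih₁ ih₂ => exact .mp (.mp (.ax (.ax2 _ _ _)) ih₁) ih₂

theorem efq (d : GLDeriv Γ .bot) : GLDeriv Γ φ :=
  .mp (.ax (.ax3 φ)) (.mp (.ax (.ax1 .bot φ.neg)) d)

theorem by_contra (d : GLDeriv (insert φ.neg Γ) .bot) : GLDeriv Γ φ :=
  .mp (.ax (.ax3 φ)) d.imp_intro

theorem and_intro (d₁ : GLDeriv Γ φ) (d₂ : GLDeriv Γ ψ) : GLDeriv Γ (φ.and ψ) :=
  imp_intro <| .mp (.mp (.hyp (Set.mem_insert _ _)) (d₁.mono (Set.subset_insert _ _)))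
    (d₂.mono (Set.subset_insert _ _))

theorem and_left (d : GLDeriv Γ (φ.and ψ)) : GLDeriv Γ φ :=
  by_contra <| .mp (d.mono (Set.subset_insert _ _)) <| imp_intro <| efq <|
    .mp (.hyp (by simp [Formula.neg])) (.hyp (Set.mem_insert _ _))

theorem and_right (d : GLDeriv Γ (φ.and ψ)) : GLDeriv Γ ψ :=
  by_contra <| .mp (d.mono (Set.subset_insert _ _)) <|
    .mp (.ax (.ax1 _ φ)) (.hyp (Set.mem_insert _ _))

theorem box (d : GLDeriv Γ φ) : GLDeriv (Formula.box '' Γ) φ.box := by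
  induction d with
  | ax h => exact .ax h.nec
  | hyp h => exact .hyp (Set.mem_image_of_mem _ h)
  | mp _ _ ih₁ ih₂ => exact .mp (.mp (.ax (.axK _ _)) ih₁) ih₂

theorem lob (d : GLDeriv Γ (φ.box.imp φ).box) : GLDeriv Γ φ.box :=
  .mp (.ax (.axLob φ)) d

/-- Löb's axiom applied to `φ ∧ □φ`. -/
theorem four (φ : Formula) : GLDeriv {φ.box} φ.box.box := by
  set σ := φ.and φ.box
  have hσφ : GLDeriv {σ} φ := and_left (.hyp rfl)
  have hσbox : GLDeriv {σ} φ.box := and_right (.hyp rfl)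
  have hrefl : GLDeriv {φ} (σ.box.imp σ) := by
    refine imp_intro (and_intro (.hyp (by simp)) ?_)
    exact hσφ.box.mono (by simp)
  have hboxσ : GLDeriv {φ.box} σ.box := lob (by simpa using hrefl.box)
  exact (by simpa using hσbox.box : GLDeriv {σ.box} φ.box.box).trans (by simpa using hboxσ)

theorem boxGL {ξ : Formula} (d : GLDeriv (insert ξ.box (Γ ∪ Formula.box '' Γ)) ξ) :
    GLDeriv (Formula.box '' Γ) ξ.box := by
  refine lob (d.imp_intro.box.trans ?_)
  rintro _ ⟨γ, hγ | ⟨η, hη, rfl⟩, rfl⟩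
  · exact .hyp ⟨γ, hγ, rfl⟩
  · exact (four η).trans fun _ h => .hyp ⟨η, hη, (Set.mem_singleton_iff.mp h).symm⟩

end GLDeriv

theorem GLSHilbert.of_glDeriv {Γ : Set Formula} {φ : Formula} (d : GLDeriv Γ φ)
    (hΓ : ∀ γ ∈ Γ, GLSHilbert γ) : GLSHilbert φ := by
  induction d with
  | ax h => exact .gl h
  | hyp h => exact hΓ _ h
  | mp _ _ ih₁ ih₂ => exact .mp ih₁ ih₂

theorem wellFounded_flip_iff_forall_not_chain {α : Type*} {r : α → α → Prop} :
    WellFounded (flip r) ↔ ∀ f : ℕ → α, ¬ ∀ i, r (f i) (f (i + 1)) := by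
  rw [wellFounded_iff_isEmpty_descending_chain, isEmpty_subtype]
  rfl

theorem GLModel.wellFounded_flip_R (M : GLModel) : WellFounded (flip M.R) :=
  wellFounded_flip_iff_forall_not_chain.mpr M.cwf

theorem GLHilbert.sound {φ : Formula} (h : GLHilbert φ) (M : GLModel) (w : M.World) :
    M.sat w φ := by
  induction h generalizing w with
  | ax1 => exact fun h _ => h
  | ax2 => exact fun h₁ h₂ h₃ => h₁ h₃ (h₂ h₃)
  | ax3 => exact fun h => by_contra h
  | axK => exact fun h₁ h₂ u hwu => h₁ u hwu (h₂ u hwu)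
  | axLob α =>
    intro hlob u
    induction u using M.wellFounded_flip_R.induction with
    | _ u ih => exact fun hwu => hlob u hwu fun v huv => ih v huv (M.trans hwu huv)
  | mp _ _ ih₁ ih₂ => exact ih₁ w (ih₂ w)
  | nec _ ih => exact fun u _ => ih u

def negClosure (Φ : Finset Formula) : Finset Formula := Φ ∪ Φ.image Formula.neg

theorem box_mem_of_mem_negClosure {Φ : Finset Formula} {φ : Formula}
    (h : φ.box ∈ negClosure Φ) : φ.box ∈ Φ := by
  simpa [negClosure, Formula.neg] using h

structure IsMaxConsistentIn (Φ m : Finset Formula) : Prop where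
  subset : m ⊆ Φ
  consistent : ¬ GLDeriv ↑m .bot
  complete : ∀ χ ∈ Φ, χ ∈ m ∨ GLDeriv ↑m χ.neg

namespace IsMaxConsistentIn

variable {Φ m : Finset Formula}

theorem mem_of_glDeriv (hm : IsMaxConsistentIn Φ m) {χ : Formula} (hχ : χ ∈ Φ)
    (d : GLDeriv ↑m χ) : χ ∈ m :=
  (hm.complete χ hχ).resolve_right fun d' => hm.consistent (.mp d' d)

theorem not_mem_of_neg_mem (hm : IsMaxConsistentIn Φ m) {χ : Formula} (h : χ.neg ∈ m) :
    χ ∉ m :=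
  fun hχ => hm.consistent (.mp (.hyp h) (.hyp hχ))

theorem imp_mem_iff (hm : IsMaxConsistentIn Φ m) {φ ψ : Formula} (hφ : φ ∈ Φ) (hψ : ψ ∈ Φ)
    (hφψ : φ.imp ψ ∈ Φ) : φ.imp ψ ∈ m ↔ (φ ∈ m → ψ ∈ m) := by
  refine ⟨fun h h₁ => hm.mem_of_glDeriv hψ (.mp (.hyp h) (.hyp h₁)), fun h => ?_⟩
  refine hm.mem_of_glDeriv hφψ ?_
  by_cases h₁ : φ ∈ m
  · exact .mp (.ax (.ax1 ψ φ)) (.hyp (h h₁))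
  · have hneg : GLDeriv ↑m φ.neg := (hm.complete φ hφ).resolve_left h₁
    exact .imp_intro (.efq (.mp (hneg.mono (Set.subset_insert _ _)) (.hyp (Set.mem_insert _ _))))

end IsMaxConsistentIn

theorem exists_isMaxConsistentIn {Φ w : Finset Formula} (hw : w ⊆ Φ)
    (hcon : ¬ GLDeriv ↑w .bot) : ∃ m, w ⊆ m ∧ IsMaxConsistentIn Φ m := by
  classical
  let candidates := Φ.powerset.filter fun m => w ⊆ m ∧ ¬ GLDeriv ↑m .bot
  obtain ⟨m, hwm, hmax⟩ := candidates.exists_le_maximal (a := w) (by simp [candidates, hw, hcon])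
  obtain ⟨hmΦ, -, hmcon⟩ : m ⊆ Φ ∧ w ⊆ m ∧ ¬ GLDeriv ↑m .bot := by
    simpa [candidates] using hmax.prop
  refine ⟨m, hwm, hmΦ, hmcon, fun χ hχ => or_iff_not_imp_left.mpr fun hχm => ?_⟩
  refine .imp_intro (not_not.mp fun hins => hχm ?_)
  have hle : insert χ m ≤ m := hmax.le_of_ge
    (by simp [candidates, Finset.insert_subset_iff, hχ, hmΦ, hwm.trans (Finset.subset_insert _ _),
      hins]) (Finset.subset_insert _ _)
  exact hle (Finset.mem_insert_self _ _)

def CanonicalWorld (Φ : Finset Formula) : Type := {m : Finset Formula // IsMaxConsistentIn Φ m}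

namespace CanonicalWorld

variable {Φ : Finset Formula}

def R (x y : CanonicalWorld Φ) : Prop := boxInv x.1 ⊂ boxInv y.1 ∧ boxInv x.1 ⊆ y.1

def val (x : CanonicalWorld Φ) (p : ℕ) : Prop := Formula.var p ∈ x.1

theorem R_trans {x y z : CanonicalWorld Φ} (hxy : R x y) (hyz : R y z) : R x z := ⟨hxy.1.trans hyz.1, hxy.1.subset.trans hyz.2⟩

theorem wellFounded_flip_R : WellFounded (flip (R (Φ := Φ))) := by
  refine Subrelation.wf (fun {y x} hxy => ?_) (measure fun x : CanonicalWorld Φ =>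
    (boxInv Φ).card - (boxInv x.1).card).wf
  have hbound : (boxInv y.1).card ≤ (boxInv Φ).card :=
    Finset.card_le_card fun _ h => mem_boxInv.mpr (y.2.subset (mem_boxInv.mp h))
  have := Finset.card_lt_card hxy.1
  change (boxInv Φ).card - (boxInv y.1).card < (boxInv Φ).card - (boxInv x.1).card
  omega

end CanonicalWorld

def canonicalModel (Φ : Finset Formula) (x : CanonicalWorld Φ) : GLModel where
  World := CanonicalWorld Φ
  ne := ⟨x⟩
  R := CanonicalWorld.R
  trans _ _ _ := CanonicalWorld.R_trans
  cwf := wellFounded_flip_iff_forall_not_chain.mp CanonicalWorld.wellFounded_flip_R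
  val := CanonicalWorld.val

namespace CanonicalWorld

variable {Φ₀ : Finset Formula}

/-- The witness `y` extends `{ξ, □ξ : □ξ ∈ x} ∪ {□ξ, ¬ξ}`; if that seed were inconsistent,
the GL rule would put `□ξ` into `x`. -/
theorem exists_R_not_mem (hΦ₀ : ∀ χ ∈ Φ₀, χ.subf ⊆ Φ₀) {ξ : Formula} (hξ : ξ.box ∈ Φ₀)
    (x : CanonicalWorld (negClosure Φ₀)) (hx : ξ.box ∉ x.1) :
    ∃ y : CanonicalWorld (negClosure Φ₀), R x y ∧ ξ ∉ y.1 := by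
  classical
  set A := boxInv x.1
  set seed := insert ξ.neg (insert ξ.box (A ∪ A.image Formula.box))
  have hA : ∀ η ∈ A, η ∈ Φ₀ ∧ η.box ∈ Φ₀ := fun η hη => by
    have hηbox := box_mem_of_mem_negClosure (x.2.subset (mem_boxInv.mp hη))
    exact ⟨hΦ₀ _ hηbox (by simp [Formula.subf, Formula.mem_subf_self]), hηbox⟩
  have hseed : seed ⊆ negClosure Φ₀ := by
    have hξ' : ξ ∈ Φ₀ := hΦ₀ _ hξ (by simp [Formula.subf, Formula.mem_subf_self])
    intro χ hχ
    simp only [seed, Finset.mem_insert, Finset.mem_union, Finset.mem_image] at hχ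
    rcases hχ with rfl | rfl | hχ | ⟨η, hη, rfl⟩
    · exact Finset.mem_union_right _ (Finset.mem_image_of_mem _ hξ')
    · exact Finset.mem_union_left _ hξ
    · exact Finset.mem_union_left _ (hA χ hχ).1
    · exact Finset.mem_union_left _ (hA η hη).2
  have hcon : ¬ GLDeriv ↑seed .bot := by
    intro d
    have hA_box : Formula.box '' (A : Set Formula) ⊆ x.1 := by
      rintro _ ⟨η, hη, rfl⟩
      exact mem_boxInv.mp hη
    refine hx (x.2.mem_of_glDeriv (Finset.mem_union_left _ hξ) ((GLDeriv.boxGL ?_).mono hA_box))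
    exact .by_contra (by simpa [seed, Finset.coe_insert, Finset.coe_union, Finset.coe_image,
      Set.insert_comm] using d)
  obtain ⟨m, hseedm, hm⟩ := exists_isMaxConsistentIn hseed hcon
  have hAm : A ⊆ m := fun η hη => hseedm (by simp [seed, hη])
  have hAboxm : ∀ η ∈ A, η.box ∈ m := fun η hη => hseedm (by simp [seed, hη])
  refine ⟨⟨m, hm⟩, ⟨Finset.ssubset_iff_subset_ne.mpr ⟨fun η hη => mem_boxInv.mpr (hAboxm η hη),
    fun hAeq => hx ?_⟩, hAm⟩, hm.not_mem_of_neg_mem (hseedm (by simp [seed]))⟩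
  have hξm : ξ ∈ boxInv m := mem_boxInv.mpr (hseedm (by simp [seed]))
  rw [← show boxInv x.1 = boxInv m from hAeq] at hξm
  exact mem_boxInv.mp hξm

theorem ksat_iff_mem (hΦ₀ : ∀ χ ∈ Φ₀, χ.subf ⊆ Φ₀) {χ : Formula} (hχ : χ ∈ Φ₀)
    (x : CanonicalWorld (negClosure Φ₀)) : KSat R val χ x ↔ χ ∈ x.1 := by
  induction χ generalizing x with
  | var p => rfl
  | bot => exact ⟨False.elim, fun h => x.2.consistent (.hyp h)⟩
  | imp φ ψ ihφ ihψ =>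
    have hφ : φ ∈ Φ₀ := hΦ₀ _ hχ (by simp [Formula.subf, Formula.mem_subf_self])
    have hψ : ψ ∈ Φ₀ := hΦ₀ _ hχ (by simp [Formula.subf, Formula.mem_subf_self])
    rw [x.2.imp_mem_iff (Finset.mem_union_left _ hφ) (Finset.mem_union_left _ hψ)
      (Finset.mem_union_left _ hχ), ← ihφ hφ, ← ihψ hψ]
    rfl
  | box ξ ih =>
    have hξ : ξ ∈ Φ₀ := hΦ₀ _ hχ (by simp [Formula.subf, Formula.mem_subf_self])
    refine ⟨fun h => not_not.mp fun hx => ?_, fun h y hxy => (ih hξ y).mpr (hxy.2 (mem_boxInv.mpr h))⟩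
    obtain ⟨y, hxy, hy⟩ := exists_R_not_mem hΦ₀ hχ x hx
    exact hy ((ih hξ y).mp (h y hxy))

end CanonicalWorld

theorem GLDeriv.exists_countermodel {Γ : Finset Formula} {φ : Formula} (h : ¬ GLDeriv ↑Γ φ) :
    ∃ (M : GLModel) (w : M.World), (∀ γ ∈ Γ, M.sat w γ) ∧ ¬ M.sat w φ := by
  classical
  set Φ₀ := SF Γ {φ}
  have hΦ₀ : ∀ χ ∈ Φ₀, χ.subf ⊆ Φ₀ := fun _ => subf_subset_SF
  have hmem : ∀ χ ∈ insert φ Γ, χ ∈ Φ₀ := fun χ hχ =>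
    Finset.mem_biUnion.mpr ⟨χ, by simpa [or_comm] using hχ, χ.mem_subf_self⟩
  have hseed : insert φ.neg Γ ⊆ negClosure Φ₀ := Finset.insert_subset
    (Finset.mem_union_right _ (Finset.mem_image_of_mem _ (hmem φ (Finset.mem_insert_self _ _))))
    fun γ hγ => Finset.mem_union_left _ (hmem γ (Finset.mem_insert_of_mem hγ))
  obtain ⟨m, hseedm, hm⟩ := exists_isMaxConsistentIn hseed fun d => h (.by_contra (by simpa using d))
  let x : CanonicalWorld (negClosure Φ₀) := ⟨m, hm⟩
  refine ⟨canonicalModel _ x, x, fun γ hγ => ?_, fun hφ => ?_⟩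
  · exact (CanonicalWorld.ksat_iff_mem hΦ₀ (hmem γ (Finset.mem_insert_of_mem hγ)) x).mpr
      (hseedm (Finset.mem_insert_of_mem hγ))
  · exact hm.not_mem_of_neg_mem (hseedm (Finset.mem_insert_self _ _))
      ((CanonicalWorld.ksat_iff_mem hΦ₀ (hmem φ (Finset.mem_insert_self _ _)) x).mp hφ)

def reflAxioms (S : Finset Formula) : Finset Formula := (boxInv S).image fun α => α.box.imp α

theorem GLModel.reflexiveFor_iff {M : GLModel} {w : M.World} {S : Finset Formula} :
    M.reflexiveFor w S ↔ ∀ γ ∈ reflAxioms S, M.sat w γ := by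
  simp [GLModel.reflexiveFor, reflAxioms, mem_boxInv]

theorem GLSHilbert.of_mem_reflAxioms {S : Finset Formula} {γ : Formula} (h : γ ∈ reflAxioms S) :
    GLSHilbert γ := by
  obtain ⟨α, -, rfl⟩ := Finset.mem_image.mp h
  exact .refl α

theorem GLSHilbert.exists_reflexiveFor_sat {φ : Formula} (h : GLSHilbert φ) :
    ∃ S : Finset Formula, ∀ (M : GLModel) (w : M.World), M.reflexiveFor w S → M.sat w φ := by
  induction h with
  | gl h => exact ⟨∅, fun M w _ => h.sound M w⟩
  | refl α => exact ⟨{α.box}, fun M w hw => hw α (Finset.mem_singleton_self _)⟩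
  | mp _ _ ih₁ ih₂ =>
    obtain ⟨S₁, h₁⟩ := ih₁
    obtain ⟨S₂, h₂⟩ := ih₂
    refine ⟨S₁ ∪ S₂, fun M w hw => h₁ M w ?_ (h₂ M w ?_)⟩
    · exact fun α hα => hw α (Finset.mem_union_left _ hα)
    · exact fun α hα => hw α (Finset.mem_union_right _ hα)

/-- Characterization C1: φ is a theorem of GLS iff there is a finite set Σ of formulas
such that φ is true at every Σ-reflexive world of every GL-model. -/
theorem gls_characterization_c1 (φ : Formula) :
    GLSHilbert φ ↔
      ∃ S : Finset Formula, ∀ (M : GLModel) (w : M.World),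
        M.reflexiveFor w S → M.sat w φ := by
  refine ⟨GLSHilbert.exists_reflexiveFor_sat, fun ⟨S, hS⟩ => ?_⟩
  refine GLSHilbert.of_glDeriv (Γ := ↑(reflAxioms S)) ?_ fun _ => GLSHilbert.of_mem_reflAxioms
  by_contra hφ
  obtain ⟨M, w, hΓ, hw⟩ := GLDeriv.exists_countermodel hφ
  exact hw (hS M w (GLModel.reflexiveFor_iff.mpr hΓ))
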